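/- arXiv:1912.07703 — 2 statements merged into one kernel-verified Lean document; each statement's English description precedes it below -/
import Mathlib

section
/- Let 𝟙_m^⊺ diag(L)^{-1} 𝟙_m = 1/L_eq(m), and let Φ⁻¹ ∈ ℝ^{(m+1)×(m+1)} be the block matrix with rows [Γ_m^⊺, 0_{m-1}], [𝟙_m^⊺ diag(L)^{-1} L_eq(m), 0], [0_m^⊺, 1]. Then Φ⁻¹ is invertible, with inverse Φ given in block form by first block column Γ_m^+ := (diag(L)/L_eq(m)) Γ_m (Γ_m^⊺ (diag(L)/L_eq(m)) Γ_m)^{-1}, second block column (𝟙_m, 0)^⊺, third block column (0_m, 1)^⊺. -/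
open Finset Matrix

/-- `L_eq(k)`: equivalent inductance of coils `0,…,k` in parallel. -/
noncomputable def Leq {n : ℕ} (L : Fin (n + 1) → ℝ) (k : Fin (n + 1)) : ℝ :=
  (∑ j ∈ Finset.univ.filter (· ≤ k), (L j)⁻¹)⁻¹

/-- `G_{k,j} = L_eq(k)/L_j` if `j ≤ k`, else `0`. -/
noncomputable def Gmat {n : ℕ} (L : Fin (n + 1) → ℝ) : Matrix (Fin n) (Fin (n + 1)) ℝ :=
  fun k j => if (j : ℕ) ≤ (k : ℕ) then Leq L k.castSucc / L j else 0

/-- `Γ_m^⊺ = G − [0 | I]`. -/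
noncomputable def GammaT {n : ℕ} (L : Fin (n + 1) → ℝ) : Matrix (Fin n) (Fin (n + 1)) ℝ :=
  Gmat L - Matrix.of (fun (k : Fin n) (j : Fin (n + 1)) =>
    if (j : ℕ) = (k : ℕ) + 1 then 1 else 0)

/-- `Γ_m^+ := (diag(L)/L_eq(m)) Γ_m (Γ_m^⊺ (diag(L)/L_eq(m)) Γ_m)⁻¹`. -/
noncomputable def GammaPlus {n : ℕ} (L : Fin (n + 1) → ℝ) : Matrix (Fin (n + 1)) (Fin n) ℝ :=
  ((Leq L (Fin.last n))⁻¹ • Matrix.diagonal L) * (GammaT L)ᵀ *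
    (GammaT L * ((Leq L (Fin.last n))⁻¹ • Matrix.diagonal L) * (GammaT L)ᵀ)⁻¹

/-- The state change of coordinates `Φ⁻¹`, with rows `[Γ_m^⊺, 0]`,
`[𝟙^⊺ diag(L)⁻¹ L_eq(m), 0]`, `[0, 1]`: row index `Sum.inl k` with `k < n` is the
`k`-th Casimir row, row `Sum.inl n` (the last one) is the total-flux row, and
row `Sum.inr ()` is the charge row. -/
noncomputable def PhiInv {n : ℕ} (L : Fin (n + 1) → ℝ) :
    Matrix (Fin (n + 1) ⊕ Unit) (Fin (n + 1) ⊕ Unit) ℝ :=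
  fun i j =>
    match i, j with
    | Sum.inl k, Sum.inl j =>
        if h : (k : ℕ) < n then GammaT L ⟨k, h⟩ j else Leq L (Fin.last n) * (L j)⁻¹
    | Sum.inl _, Sum.inr _ => 0
    | Sum.inr _, Sum.inl _ => 0
    | Sum.inr _, Sum.inr _ => 1

/-- The claimed inverse `Φ`: first block column `Γ_m^+`, second block column
`(𝟙_m, 0)ᵀ`, third block column `(0_m, 1)ᵀ`. -/
noncomputable def Phi {n : ℕ} (L : Fin (n + 1) → ℝ) :
    Matrix (Fin (n + 1) ⊕ Unit) (Fin (n + 1) ⊕ Unit) ℝ :=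
  fun i j =>
    match i, j with
    | Sum.inl i, Sum.inl k =>
        if h : (k : ℕ) < n then GammaPlus L i ⟨k, h⟩ else 1
    | Sum.inl _, Sum.inr _ => 0
    | Sum.inr _, Sum.inl _ => 0
    | Sum.inr _, Sum.inr _ => 1

/-! The rows of `Γ_m^⊺` sum to zero, while the total-flux row `w = L_eq(m) 𝟙^⊺ diag(L)⁻¹` sums
to one. The last `m - 1` columns of `Γ_m^⊺` form a lower triangular matrix with diagonal `-1`, so
`Γ_m` has full column rank and the Gram matrix `Γ_m^⊺ (diag(L)/L_eq(m)) Γ_m` is positive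
definite; hence `Γ_m^⊺ Γ_m^+ = I`. Finally `w (diag(L)/L_eq(m)) = 𝟙^⊺`, which `Γ_m` annihilates,
so `w Γ_m^+ = 0`. These are the four block identities of `Φ⁻¹ Φ = I`, and a one-sided inverse of
a square matrix is two-sided. -/

theorem Matrix.vecMul_injective_of_isUnit_submatrix {m n R : Type*} [Fintype m] [DecidableEq m]
    [CommRing R] {B : Matrix m n R} {f : m → n} (hB : IsUnit (B.submatrix id f)) :
    Function.Injective B.vecMul := fun _ _ h =>
  vecMul_injective_of_isUnit hB (funext fun j => congrFun h (f j))

theorem Matrix.of_dite_mul_of_dite_eq_one {m R : Type*} [Fintype m] [CommRing R] {n : ℕ}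
    {A : Matrix (Fin n) m R} {w : m → R} {B : Matrix m (Fin n) R} {v : m → R}
    (hAB : A * B = 1) (hAv : A *ᵥ v = 0) (hwB : w ᵥ* B = 0) (hwv : w ⬝ᵥ v = 1) :
    (of fun (i : Fin (n + 1)) j => if h : (i : ℕ) < n then A ⟨i, h⟩ j else w j) *
      (of fun x (j : Fin (n + 1)) => if h : (j : ℕ) < n then B x ⟨j, h⟩ else v x) = 1 := by
  ext i j
  induction i using Fin.lastCases with
  | last =>
    induction j using Fin.lastCases with
    | last => simpa [mul_apply, dotProduct] using hwv
    | cast j =>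
      rw [one_apply_ne (Fin.castSucc_lt_last j).ne']
      simpa [mul_apply, vecMul, dotProduct] using congrFun hwB j
  | cast i =>
    induction j using Fin.lastCases with
    | last =>
      rw [one_apply_ne (Fin.castSucc_lt_last i).ne]
      simpa [mul_apply, mulVec, dotProduct] using congrFun hAv i
    | cast j => simpa [mul_apply, one_apply, Fin.ext_iff] using congrFun (congrFun hAB i) j

section Circuit

variable {n : ℕ} {L : Fin (n + 1) → ℝ}

theorem sum_filter_le_inv_pos (hL : ∀ j, 0 < L j) (k : Fin (n + 1)) :
    0 < ∑ j ∈ univ.filter (· ≤ k), (L j)⁻¹ :=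
  sum_pos (fun j _ => inv_pos.2 (hL j)) ⟨0, by simp⟩

theorem Leq_pos (hL : ∀ j, 0 < L j) (k : Fin (n + 1)) : 0 < Leq L k :=
  inv_pos.2 (sum_filter_le_inv_pos hL k)

theorem Leq_mul_sum_inv (hL : ∀ j, 0 < L j) (k : Fin (n + 1)) :
    Leq L k * ∑ j ∈ univ.filter (· ≤ k), (L j)⁻¹ = 1 :=
  inv_mul_cancel₀ (sum_filter_le_inv_pos hL k).ne'

theorem Gmat_mulVec_one (hL : ∀ j, 0 < L j) : Gmat L *ᵥ 1 = 1 := by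
  funext k
  rw [Pi.one_apply, ← Leq_mul_sum_inv hL k.castSucc, mul_sum, sum_filter]
  simp [mulVec, dotProduct, Gmat, Fin.le_def, div_eq_mul_inv]

theorem GammaT_mulVec_one (hL : ∀ j, 0 < L j) : GammaT L *ᵥ 1 = 0 := by
  have hshift : (of fun (k : Fin n) (j : Fin (n + 1)) => if (j : ℕ) = k + 1 then (1 : ℝ) else 0)
      *ᵥ 1 = 1 := by
    funext k
    simp [mulVec, dotProduct, ← Fin.val_succ, Fin.val_inj]
  rw [GammaT, sub_mulVec, Gmat_mulVec_one hL, hshift, sub_self]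

theorem GammaT_apply_succ_self (k : Fin n) : GammaT L k k.succ = -1 := by
  simp [GammaT, Gmat]

theorem GammaT_submatrix_succ_isLowerTriangular :
    ((GammaT L).submatrix id Fin.succ).IsLowerTriangular := by
  intro k i hki
  have hki : k < i := hki
  simp [GammaT, Gmat, hki.not_gt, Fin.val_injective.ne hki.ne']

theorem isUnit_GammaT_submatrix_succ : IsUnit ((GammaT L).submatrix id Fin.succ) := by
  rw [isUnit_iff_isUnit_det, det_of_isLowerTriangular _ GammaT_submatrix_succ_isLowerTriangular]
  simp [GammaT_apply_succ_self]

theorem posDef_GammaT_mul_mul_transpose (hL : ∀ j, 0 < L j) :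
    (GammaT L * ((Leq L (Fin.last n))⁻¹ • diagonal L) * (GammaT L)ᵀ).PosDef := by
  have hD : ((Leq L (Fin.last n))⁻¹ • diagonal L).PosDef := by
    rw [← diagonal_smul]
    exact PosDef.diagonal fun i => mul_pos (inv_pos.2 (Leq_pos hL _)) (hL i)
  rw [← conjTranspose_eq_transpose_of_trivial]
  exact hD.mul_mul_conjTranspose_same (vecMul_injective_of_isUnit_submatrix
    isUnit_GammaT_submatrix_succ)

theorem GammaT_mul_GammaPlus (hL : ∀ j, 0 < L j) : GammaT L * GammaPlus L = 1 := by
  rw [GammaPlus, ← Matrix.mul_assoc, ← Matrix.mul_assoc]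
  exact mul_nonsing_inv _ ((isUnit_iff_isUnit_det _).1
    (posDef_GammaT_mul_mul_transpose hL).isUnit)

theorem vecMul_GammaPlus (hL : ∀ j, 0 < L j) :
    (fun j => Leq L (Fin.last n) * (L j)⁻¹) ᵥ* GammaPlus L = 0 := by
  have hflux : (fun j => Leq L (Fin.last n) * (L j)⁻¹) ᵥ* ((Leq L (Fin.last n))⁻¹ • diagonal L)
      = 1 := by
    funext j
    have := (Leq_pos hL (Fin.last n)).ne'
    have := (hL j).ne'
    simp only [← diagonal_smul, vecMul_diagonal, Pi.smul_apply, smul_eq_mul, Pi.one_apply]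
    field_simp
  rw [GammaPlus, ← vecMul_vecMul, ← vecMul_vecMul, hflux, vecMul_transpose,
    GammaT_mulVec_one hL, zero_vecMul]

theorem dotProduct_Leq_last_mul_inv_one (hL : ∀ j, 0 < L j) :
    (fun j => Leq L (Fin.last n) * (L j)⁻¹) ⬝ᵥ 1 = 1 := by
  simpa [dotProduct, mul_sum, Fin.le_last] using Leq_mul_sum_inv hL (Fin.last n)

theorem PhiInv_eq_fromBlocks : PhiInv L = fromBlocks
    (of fun (k : Fin (n + 1)) j =>
      if h : (k : ℕ) < n then GammaT L ⟨k, h⟩ j else Leq L (Fin.last n) * (L j)⁻¹) 0 0 1 := by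
  ext (k | _) (j | _) <;> rfl

theorem Phi_eq_fromBlocks : Phi L = fromBlocks
    (of fun i (k : Fin (n + 1)) => if h : (k : ℕ) < n then GammaPlus L i ⟨k, h⟩ else 1) 0 0 1 := by
  ext (k | _) (j | _) <;> rfl

end Circuit

theorem stmt4_general (n : ℕ) (L : Fin (n + 1) → ℝ) (hL : ∀ j, 0 < L j) :
    PhiInv L * Phi L = 1 ∧ Phi L * PhiInv L = 1 := by
  have h : PhiInv L * Phi L = 1 := by
    have hblock := of_dite_mul_of_dite_eq_one (GammaT_mul_GammaPlus hL) (GammaT_mulVec_one hL)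
      (vecMul_GammaPlus hL) (dotProduct_Leq_last_mul_inv_one hL)
    simp only [Pi.one_apply] at hblock
    simp [PhiInv_eq_fromBlocks, Phi_eq_fromBlocks, fromBlocks_multiply, hblock]
  exact ⟨h, mul_eq_one_comm.mp h⟩

theorem stmt4 (n : ℕ) (hn : 1 ≤ n) (L : Fin (n + 1) → ℝ) (hL : ∀ j, 0 < L j) :
    PhiInv L * Phi L = 1 ∧ Phi L * PhiInv L = 1 :=
  stmt4_general n L hL
end

section
/- With Φ⁻¹ as defined above, the similarity transform Φ⁻¹(𝒥 − ℛ)Φ^{-⊺} equals the block matrix [[0_{(m-1)×(m-1)}, 0_{m-1}, 0_{m-1}],[0_{m-1}^⊺, 0, −1],[0_{m-1}^⊺, 1, −1/R]]; in particular the dynamics of the repartition coordinates 𝒞 are fully decoupled from those of (φ_T, Q). -/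
open Finset Matrix

/-- Interconnection matrix `𝒥 = [[0, −𝟙],[𝟙^⊺, 0]]`. -/
def Jmat (m : ℕ) : Matrix (Fin m ⊕ Unit) (Fin m ⊕ Unit) ℝ :=
  fun i j =>
    match i, j with
    | Sum.inl _, Sum.inr _ => -1
    | Sum.inr _, Sum.inl _ => 1
    | _, _ => 0

/-- Dissipation matrix `ℛ = diag(0_m, 1/R)`. -/
noncomputable def Rmat (m : ℕ) (R : ℝ) : Matrix (Fin m ⊕ Unit) (Fin m ⊕ Unit) ℝ :=
  fun i j =>
    match i, j with
    | Sum.inr _, Sum.inr _ => 1 / R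
    | _, _ => 0

/-- Target block matrix `[[0,0,0],[0,0,−1],[0,1,−1/R]]`: the `𝒞`-rows and columns
are all zero, the total-flux row (index `Sum.inl n`) and charge row are coupled. -/
noncomputable def Target (n : ℕ) (R : ℝ) :
    Matrix (Fin (n + 1) ⊕ Unit) (Fin (n + 1) ⊕ Unit) ℝ :=
  fun i j =>
    match i, j with
    | Sum.inl _, Sum.inl _ => 0
    | Sum.inl k, Sum.inr _ => if (k : ℕ) = n then -1 else 0
    | Sum.inr _, Sum.inl j => if (j : ℕ) = n then 1 else 0
    | Sum.inr _, Sum.inr _ => -(1 / R)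

lemma Leq_sum (n : ℕ) (L : Fin (n + 1) → ℝ) (hL : ∀ j, 0 < L j) (k : Fin (n + 1)) :
    Leq L k * ∑ j ∈ Finset.univ.filter (· ≤ k), (L j)⁻¹ = 1 := by
  have hpos : 0 < ∑ j ∈ Finset.univ.filter (· ≤ k), (L j)⁻¹ :=
    Finset.sum_pos' (fun j _ => by have := hL j; positivity)
      ⟨k, by simp, by have := hL k; positivity⟩
  rw [Leq, inv_mul_cancel₀ hpos.ne']

lemma rowsum (n : ℕ) (L : Fin (n + 1) → ℝ) (hL : ∀ j, 0 < L j) (k : Fin (n + 1)) :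
    ∑ j, (if h : (k : ℕ) < n then GammaT L ⟨k, h⟩ j else Leq L (Fin.last n) * (L j)⁻¹)
      = if (k : ℕ) = n then 1 else 0 := by
  by_cases h : (k : ℕ) < n
  · simp only [dif_pos h, if_neg (Nat.ne_of_lt h), GammaT, Matrix.sub_apply, Matrix.of_apply,
      Finset.sum_sub_distrib, Gmat]
    have h1 : ∑ j : Fin (n + 1), (if (j : ℕ) ≤ (k : ℕ) then Leq L (⟨k, h⟩ : Fin n).castSucc / L j else 0)
        = Leq L (⟨k, h⟩ : Fin n).castSucc * ∑ j ∈ Finset.univ.filter (· ≤ (⟨k, h⟩ : Fin n).castSucc), (L j)⁻¹ := by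
      rw [Finset.mul_sum, Finset.sum_filter]
      refine Finset.sum_congr rfl fun j _ => ?_
      have hle : (j ≤ (⟨k, h⟩ : Fin n).castSucc) ↔ (j : ℕ) ≤ (k : ℕ) := by
        rw [Fin.le_def]; rfl
      rw [if_congr hle.symm rfl rfl]
      split <;> simp [div_eq_mul_inv]
    have h2 : ∑ j : Fin (n + 1), (if (j : ℕ) = ((⟨k, h⟩ : Fin n) : ℕ) + 1 then (1:ℝ) else 0) = 1 := by
      have hkey : ∀ j : Fin (n + 1), ((j : ℕ) = (k : ℕ) + 1) ↔ j = ⟨(k : ℕ) + 1, by omega⟩ := by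
        intro j; simp [Fin.ext_iff]
      simp only [hkey]
      simp
    rw [h1, h2, Leq_sum n L hL]
    ring
  · have hk : (k : ℕ) = n := by omega
    simp only [dif_neg h, if_pos hk]
    have hfilter : Finset.univ.filter (· ≤ Fin.last n) = (Finset.univ : Finset (Fin (n+1))) := by
      ext j; simp [Fin.le_last]
    calc ∑ j, Leq L (Fin.last n) * (L j)⁻¹
        = Leq L (Fin.last n) * ∑ j ∈ Finset.univ.filter (· ≤ Fin.last n), (L j)⁻¹ := by
          rw [hfilter, Finset.mul_sum]
      _ = 1 := Leq_sum n L hL (Fin.last n)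

theorem stmt6 (n : ℕ) (hn : 1 ≤ n) (L : Fin (n + 1) → ℝ) (hL : ∀ j, 0 < L j)
    (R : ℝ) (hR : 0 < R) :
    PhiInv L * (Jmat (n + 1) - Rmat (n + 1) R) * (PhiInv L)ᵀ = Target n R := by
  funext i j
  cases i with
  | inl k =>
    cases j with
    | inl j =>
      simp [Matrix.mul_apply, Fintype.sum_sum_type, PhiInv, Jmat, Rmat, Target,
        Matrix.sub_apply, Finset.mul_sum]
    | inr u =>
      have hr := rowsum n L hL k
      simp only [Matrix.mul_apply, Fintype.sum_sum_type, PhiInv, Jmat, Rmat, Target,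
        Matrix.sub_apply, Matrix.transpose_apply, Fintype.univ_unit, Finset.sum_singleton]
      simp only [sub_zero, zero_sub, mul_zero, Finset.sum_const_zero, add_zero, mul_one,
        zero_mul, mul_neg, mul_one, zero_add, neg_zero, Finset.sum_neg_distrib, hr]
      split <;> simp
  | inr u =>
    cases j with
    | inl j =>
      have hr := rowsum n L hL j
      simp only [Matrix.mul_apply, Fintype.sum_sum_type, PhiInv, Jmat, Rmat, Target,
        Matrix.sub_apply, Matrix.transpose_apply, Fintype.univ_unit, Finset.sum_singleton]
      simp only [sub_zero, zero_sub, mul_zero, Finset.sum_const_zero, add_zero, mul_one,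
        one_mul, zero_mul, zero_add, neg_zero, hr]
    | inr u' =>
      simp [Matrix.mul_apply, Fintype.sum_sum_type, PhiInv, Jmat, Rmat, Target,
        Matrix.sub_apply]
end
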